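/- If positive reals a₁, …, aₙ contain k+1 elements linearly independent over ℚ, then the box a₁×⋯×aₙ cannot be partitioned into finitely many boxes each having at most k distinct side lengths. -/

import Mathlib

/-!
Pick an alternating `ℚ`-multilinear form `D` on `ℝ^(k+1)` with `D (a ∘ s) = 1` (it exists
since the `a (s c)` are `ℚ`-independent) and, for every direction `j`, a `ℚ`-linear form `h j`
with `h j (a j) ≠ 0`. The function `Φ x = D (x ∘ s) * ∏_{j ∉ range s} h j (x j)` is additive in
each coordinate, so `J ↦ Φ (side J)` is additive over dissections. On a box with at most `k`
distinct side lengths two of the `k + 1` sides in the directions `s c` coincide and `Φ` vanishes,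
whereas `Φ a ≠ 0`.
-/

/-- An axis-parallel box in ℝⁿ with positive side lengths. -/
structure Box (n : ℕ) where
  lower : Fin n → ℝ
  upper : Fin n → ℝ
  lower_lt_upper : ∀ i, lower i < upper i

namespace Box

/-- The closed box as a subset of ℝⁿ. -/
def toSet {n : ℕ} (B : Box n) : Set (Fin n → ℝ) :=
  Set.univ.pi fun i => Set.Icc (B.lower i) (B.upper i)

/-- The open interior of the box. -/
def interiorSet {n : ℕ} (B : Box n) : Set (Fin n → ℝ) :=
  Set.univ.pi fun i => Set.Ioo (B.lower i) (B.upper i)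

/-- The side length of the box in direction `i`. -/
def side {n : ℕ} (B : Box n) (i : Fin n) : ℝ := B.upper i - B.lower i

end Box

/-- The boxes `t` form a finite partition (dissection) of `B`:
pairwise disjoint interiors, and their union covers `B`. -/
def IsDissection {n m : ℕ} (B : Box n) (t : Fin m → Box n) : Prop :=
  (∀ i j, i ≠ j → Disjoint (t i).interiorSet (t j).interiorSet) ∧
  (⋃ i, (t i).toSet) = B.toSet

/-- `P` is cut by a hyperplane parallel to a pair of its faces into `P₁` and `P₂`. -/
def IsSplit {n : ℕ} (P P₁ P₂ : Box n) : Prop :=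
  ∃ (j : Fin n) (c : ℝ), P.lower j < c ∧ c < P.upper j ∧
    P₁.lower = P.lower ∧ P₁.upper = Function.update P.upper j c ∧
    P₂.lower = Function.update P.lower j c ∧ P₂.upper = P.upper

open Function Filter Topology

namespace BoxIntegral

variable {ι : Type*}

namespace Box

theorem eventually_sub_const_mem_Ioo [Finite ι] (I : Box ι) {x : ι → ℝ} (hx : x ∈ I) :
    ∀ᶠ ε in 𝓝[>] (0 : ℝ), x - const ι ε ∈ Box.Ioo I := by
  have hsmall : ∀ᶠ ε in 𝓝[>] (0 : ℝ), ∀ i, ε < x i - I.lower i :=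
    eventually_all.2 fun i => nhdsWithin_le_nhds (eventually_lt_nhds (sub_pos.2 (hx i).1))
  filter_upwards [self_mem_nhdsWithin, hsmall] with ε (hε : 0 < ε) hεx i _
  constructor <;> simp only [Pi.sub_apply, const_apply] <;> linarith [hεx i, (hx i).2]

theorem nonempty_Ioo [Finite ι] (I : Box ι) : (Box.Ioo I).Nonempty :=
  let ⟨_, h⟩ := (I.eventually_sub_const_mem_Ioo I.upper_mem).exists
  ⟨_, h⟩

theorem disjoint_coe_of_disjoint_Ioo [Finite ι] {I J : Box ι}
    (h : Disjoint (Box.Ioo I) (Box.Ioo J)) : Disjoint (I : Set (ι → ℝ)) J := by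
  refine Set.disjoint_left.2 fun x hxI hxJ => ?_
  obtain ⟨ε, hεI, hεJ⟩ :=
    ((I.eventually_sub_const_mem_Ioo hxI).and (J.eventually_sub_const_mem_Ioo hxJ)).exists
  exact Set.disjoint_left.1 h hεI hεJ

theorem exists_mem_of_Icc_subset_iUnion [Finite ι] {α : Type*} [Finite α] {I : Box ι}
    {J : α → Box ι} (hIJ : Box.Icc I ⊆ ⋃ a, Box.Icc (J a)) {x : ι → ℝ} (hx : x ∈ I) :
    ∃ a, x ∈ J a := by
  have hcover : ∀ᶠ ε in 𝓝[>] (0 : ℝ), ∃ a, x - const ι ε ∈ Box.Icc (J a) :=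
    (I.eventually_sub_const_mem_Ioo hx).mono fun ε hε =>
      Set.mem_iUnion.1 (hIJ (I.Ioo_subset_Icc hε))
  obtain ⟨a, ha⟩ := frequently_exists.1 hcover.frequently
  have htendsto : Tendsto (fun ε => x - const ι ε) (𝓝[>] 0) (𝓝 x) := by
    have : Continuous fun ε : ℝ => x - const ι ε := by fun_prop
    simpa using (this.tendsto 0).mono_left nhdsWithin_le_nhds
  have hxJ : x ∈ Box.Icc (J a) :=
    (J a).isCompact_Icc.isClosed.mem_of_frequently_of_tendsto ha htendsto
  obtain ⟨ε, hεJ, hε⟩ := (ha.and_eventually self_mem_nhdsWithin).exists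
  refine ⟨a, fun i => ⟨?_, hxJ.2 i⟩⟩
  have := hεJ.1 i
  simp only [Pi.sub_apply, const_apply] at this
  linarith [show (0 : ℝ) < ε from hε]

end Box

namespace BoxAdditiveMap

variable [Finite ι] [DecidableEq ι] {M : Type*} [AddCommMonoid M]

def ofSides (Φ : (ι → ℝ) → M)
    (hΦ : ∀ x i u v, Φ (update x i (u + v)) = Φ (update x i u) + Φ (update x i v)) :
    ι →ᵇᵃ M :=
  ofMapSplitAdd (fun J => Φ (J.upper - J.lower)) ⊤ fun I _ i x hx => by
    rw [Box.splitLower_def hx, Box.splitUpper_def hx]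
    change Φ (update I.upper i x - I.lower) + Φ (I.upper - update I.lower i x) = _
    have hlower : update I.upper i x - I.lower = update (I.upper - I.lower) i (x - I.lower i) := by
      rw [update_sub, update_eq_self]
    have hupper : I.upper - update I.lower i x = update (I.upper - I.lower) i (I.upper i - x) := by
      rw [update_sub, update_eq_self]
    rw [hlower, hupper, ← hΦ, sub_add_sub_cancel']
    exact congrArg Φ (update_eq_self i _)

end BoxAdditiveMap

end BoxIntegral

namespace Box

variable {n : ℕ}

def toBoxIntegral (B : Box n) : BoxIntegral.Box (Fin n) := ⟨B.lower, B.upper, B.lower_lt_upper⟩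

theorem toSet_eq_Icc (B : Box n) : B.toSet = BoxIntegral.Box.Icc B.toBoxIntegral :=
  Set.pi_univ_Icc _ _

theorem side_pos (B : Box n) (i : Fin n) : 0 < B.side i :=
  sub_pos.2 (B.lower_lt_upper i)

end Box

namespace IsDissection

variable {n m : ℕ} {B : Box n} {t : Fin m → Box n}

theorem toBoxIntegral_le (hd : IsDissection B t) (i : Fin m) :
    (t i).toBoxIntegral ≤ B.toBoxIntegral := by
  rw [BoxIntegral.Box.le_iff_Icc, ← Box.toSet_eq_Icc, ← Box.toSet_eq_Icc, ← hd.2]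
  exact Set.subset_iUnion (fun i => (t i).toSet) i

theorem injective_toBoxIntegral (hd : IsDissection B t) :
    Injective fun i => (t i).toBoxIntegral := by
  intro i j hij
  by_contra hne
  have hdisj : Disjoint (BoxIntegral.Box.Ioo (t i).toBoxIntegral)
      (BoxIntegral.Box.Ioo (t j).toBoxIntegral) := hd.1 i j hne
  rw [show (t i).toBoxIntegral = (t j).toBoxIntegral from hij, disjoint_self,
    Set.bot_eq_empty] at hdisj
  exact (t j).toBoxIntegral.nonempty_Ioo.ne_empty hdisj

open Classical in
noncomputable def prepartition (hd : IsDissection B t) :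
    BoxIntegral.Prepartition B.toBoxIntegral where
  boxes := Finset.univ.image fun i => (t i).toBoxIntegral
  le_of_mem' := by
    simp only [Finset.mem_image, Finset.mem_univ, true_and, forall_exists_index,
      forall_apply_eq_imp_iff]
    exact hd.toBoxIntegral_le
  pairwiseDisjoint := by
    simp only [Finset.coe_image, Finset.coe_univ, Set.image_univ]
    rintro _ ⟨i, rfl⟩ _ ⟨j, rfl⟩ hij
    exact BoxIntegral.Box.disjoint_coe_of_disjoint_Ioo (hd.1 i j fun h => hij (by rw [h]))

theorem isPartition_prepartition (hd : IsDissection B t) : hd.prepartition.IsPartition := by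
  classical
  intro x hx
  obtain ⟨i, hi⟩ := BoxIntegral.Box.exists_mem_of_Icc_subset_iUnion
    (J := fun i => (t i).toBoxIntegral) (by simp only [← Box.toSet_eq_Icc, hd.2, subset_refl]) hx
  exact ⟨_, Finset.mem_image_of_mem (fun i => (t i).toBoxIntegral) (Finset.mem_univ i), hi⟩

theorem sum_map_side {M : Type*} [AddCommMonoid M] (hd : IsDissection B t)
    (Φ : (Fin n → ℝ) → M)
    (hΦ : ∀ x i u v, Φ (update x i (u + v)) = Φ (update x i u) + Φ (update x i v)) :
    ∑ i, Φ (t i).side = Φ B.side := by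
  classical
  have := (BoxIntegral.BoxAdditiveMap.ofSides Φ hΦ).sum_partition_boxes le_top
    hd.isPartition_prepartition
  rwa [prepartition, Finset.sum_image fun i _ j _ hij => hd.injective_toBoxIntegral hij] at this

end IsDissection

theorem LinearIndependent.exists_alternatingMap_apply_eq_one {K V κ : Type*} [Field K]
    [AddCommGroup V] [Module K V] [Fintype κ] [DecidableEq κ] {v : κ → V}
    (hv : LinearIndependent K v) : ∃ D : V [⋀^κ]→ₗ[K] K, D v = 1 := by
  obtain ⟨π, hπ⟩ := (Submodule.span K (Set.range v)).subtype.exists_leftInverse_of_injective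
    (Submodule.ker_subtype _)
  refine ⟨(Module.Basis.span hv).det.compLinearMap π, ?_⟩
  have hπv : (fun i => π (v i)) = Module.Basis.span hv := funext fun i => by
    rw [Module.Basis.span_apply]
    exact LinearMap.congr_fun hπ ⟨v i, Submodule.subset_span (Set.mem_range_self i)⟩
  rw [AlternatingMap.compLinearMap_apply, hπv, Module.Basis.det_self]

section SideInvariant

variable {κ ι R V : Type*} [Fintype κ] [Fintype ι] [DecidableEq ι]

def sideInvariant [CommMonoid R] (D : (κ → V) → R) (s : κ → ι) (h : ι → V → R) (x : ι → V) :
    R :=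
  D (x ∘ s) * ∏ j ∈ (Finset.univ.image s)ᶜ, h j (x j)

theorem sideInvariant_update_add [CommSemiring R] [AddCommMonoid V] [Module R V] [DecidableEq κ]
    (D : MultilinearMap R (fun _ : κ => V) R) {s : κ → ι} (hs : Injective s) (h : ι → V →ₗ[R] R)
    (x : ι → V) (i : ι) (u v : V) :
    sideInvariant D s (h ·) (update x i (u + v)) =
      sideInvariant D s (h ·) (update x i u) + sideInvariant D s (h ·) (update x i v) := by
  by_cases hi : i ∈ Set.range s
  · obtain ⟨c, rfl⟩ := hi
    have hprod : ∀ y, ∏ j ∈ (Finset.univ.image s)ᶜ, h j (update x (s c) y j) =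
        ∏ j ∈ (Finset.univ.image s)ᶜ, h j (x j) := fun y =>
      Finset.prod_congr rfl fun j hj => by
        rw [update_of_ne]
        rintro rfl
        simp at hj
    simp only [sideInvariant, update_comp_eq_of_injective _ hs, hprod, D.map_update_add, add_mul]
  · have hmem : i ∈ (Finset.univ.image s)ᶜ := by simpa using hi
    have hprod : ∀ y, ∏ j ∈ (Finset.univ.image s)ᶜ, h j (update x i y j) =
        h i y * ∏ j ∈ (Finset.univ.image s)ᶜ.erase i, h j (x j) := fun y => by
      rw [← Finset.mul_prod_erase _ _ hmem, update_self]
      congr 1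
      exact Finset.prod_congr rfl fun j hj => by rw [update_of_ne (Finset.ne_of_mem_erase hj)]
    simp only [sideInvariant, update_comp_eq_of_notMem_range _ _ hi, hprod, map_add]
    ring

theorem sideInvariant_eq_zero [CommSemiring R] [AddCommMonoid V] [Module R V]
    (D : V [⋀^κ]→ₗ[R] R) (s : κ → ι) (h : ι → V → R) {x : ι → V} {c c' : κ} (hcc' : c ≠ c')
    (hx : x (s c) = x (s c')) :
    sideInvariant D s h x = 0 := by
  rw [sideInvariant, D.map_eq_zero_of_eq (x ∘ s) hx hcc', zero_mul]

theorem sideInvariant_ne_zero [CommMonoidWithZero R] [NoZeroDivisors R] [Nontrivial R]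
    {D : (κ → V) → R} {s : κ → ι} {h : ι → V → R} {x : ι → V} (hD : D (x ∘ s) ≠ 0)
    (hh : ∀ j, h j (x j) ≠ 0) :
    sideInvariant D s h x ≠ 0 :=
  mul_ne_zero hD (Finset.prod_ne_zero_iff.2 fun j _ => hh j)

end SideInvariant

theorem exists_ne_map_eq_of_card_image_le {α β : Type*} [Fintype α] [DecidableEq β] {k : ℕ}
    {f : α → β} (hf : (Finset.univ.image f).card ≤ k) (s : Fin (k + 1) → α) :
    ∃ c c', c ≠ c' ∧ f (s c) = f (s c') := by
  obtain ⟨c, -, c', -, hcc', heq⟩ := Finset.exists_ne_map_eq_of_card_lt_of_maps_to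
    (s := Finset.univ) (t := Finset.univ.image f)
    (by rw [Finset.card_univ, Fintype.card_fin]; omega)
    (fun c _ => Finset.mem_image_of_mem f (Finset.mem_univ (s c)))
  exact ⟨c, c', hcc', heq⟩

theorem no_kbar_partition_of_independent_sides_general (n k : ℕ) (a : Fin n → ℝ)
    (s : Fin (k + 1) → Fin n) (hli : LinearIndependent ℚ (a ∘ s)) :
    ∀ B : Box n, B.side = a →
      ¬ ∃ (m : ℕ) (t : Fin m → Box n), IsDissection B t ∧
        ∀ i, (Finset.univ.image (t i).side).card ≤ k := by
  rintro B rfl ⟨m, t, hd, hbar⟩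
  obtain ⟨D, hD⟩ := hli.exists_alternatingMap_apply_eq_one
  choose h hh using fun j => Module.Projective.exists_dual_ne_zero ℚ (B.side_pos j).ne'
  have hsum := hd.sum_map_side (sideInvariant D s (h ·))
    (sideInvariant_update_add D.toMultilinearMap hli.injective.of_comp h)
  have hbar_zero : ∀ i, sideInvariant D s (h ·) (t i).side = 0 := fun i =>
    let ⟨_, _, hcc', heq⟩ := exists_ne_map_eq_of_card_image_le (hbar i) s
    sideInvariant_eq_zero D s _ hcc' heq
  apply sideInvariant_ne_zero (hD ▸ one_ne_zero) hh
  rw [← hsum, Finset.sum_eq_zero fun i _ => hbar_zero i]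

/-- If among the sides there are `k + 1` numbers linearly independent over `ℚ`,
the box cannot be partitioned into `k`-bars. -/
theorem no_kbar_partition_of_independent_sides (n k : ℕ) (a : Fin n → ℝ)
    (ha : ∀ i, 0 < a i) (s : Fin (k + 1) → Fin n) (hs : Function.Injective s)
    (hli : LinearIndependent ℚ (a ∘ s)) :
    ∀ B : Box n, B.side = a →
      ¬ ∃ (m : ℕ) (t : Fin m → Box n), IsDissection B t ∧
        ∀ i, (Finset.univ.image (t i).side).card ≤ k :=
  no_kbar_partition_of_independent_sides_general n k a s hli
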